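/- arXiv:1802.02562 — 2 statements merged into one kernel-verified Lean document; each statement's English description precedes it below -/
import Mathlib

section
/- Let M be a matroid on a finite nonempty ground set L with rank function ρ. Then the minimum, over all distributions D on the bases of M, of the maximum satisfaction probability max_{u∈L} D[u] is equal to max{ (ρ(L) − ρ(X))/|L \ X| : X ⊊ L }. In particular this value is the maximum satisfaction probability of any minmax-Pareto distribution over the independent sets of M. -/
open scoped Classical

variable {α : Type*}

/-- `p` is a probability distribution over the feasible solutions `sol`. -/
def IsDistrib [Fintype α] (sol : Finset α → Prop) (p : Finset α → ℝ) : Prop :=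
  (∀ A, 0 ≤ p A) ∧ (∀ A, p A ≠ 0 → sol A) ∧ (∑ A : Finset α, p A) = 1

/-- The satisfaction probability of individual `u` under the distribution `p`. -/
def sat [Fintype α] [DecidableEq α] (p : Finset α → ℝ) (u : α) : ℝ :=
  ∑ A : Finset α, if u ∈ A then p A else 0

/-- `D` is Pareto-efficient. -/
def ParetoEff [Fintype α] [DecidableEq α] (sol : Finset α → Prop) (D : Finset α → ℝ) : Prop :=
  IsDistrib sol D ∧
    ¬ ∃ D', IsDistrib sol D' ∧ (∀ u, sat D u ≤ sat D' u) ∧ ∃ u, sat D u < sat D' u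

/-- `F` is minmax-Pareto. -/
def MinmaxPareto [Fintype α] [DecidableEq α] (sol : Finset α → Prop) (F : Finset α → ℝ) : Prop :=
  ParetoEff sol F ∧
    ∀ D, ParetoEff sol D → ∀ u, sat D u < sat F u →
      ∃ v, sat F v < sat D v ∧ sat F u ≤ sat F v

/-- The rank of the finite set `X` in the matroid `M`. -/
noncomputable def rnk [Fintype α] (M : Matroid α) (X : Finset α) : ℕ :=
  (X.powerset.filter fun A : Finset α => M.Indep (A : Set α)).sup Finset.card

/-- `A` is a base of `M`: a maximal independent set. -/
def IsBaseF (M : Matroid α) (A : Finset α) : Prop :=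
  M.Indep (A : Set α) ∧ ∀ B : Finset α, M.Indep (B : Set α) → A ⊆ B → A = B

/-!
Lower bound: a base meets `univ \ X` in at least `rnk M univ - rnk M X` elements, so under any
distribution on bases the satisfaction probabilities outside `X` sum to at least this number, and
their maximum is at least `rankRatio M X`.

Attainment: take a distribution `p` on bases minimising `∑ u, sat p u ^ 2` (the distributions
form a compact set), let `θ` be its maximal satisfaction probability and `X` the individuals
satisfied with probability below `θ`. If a base `B` in the support of `p` met `X` in fewer than
`rnk M X` elements, augmenting `B ∩ X` and exchanging would give a base `B - u + v` with
`u ∉ X`, `v ∈ X`; moving a little mass from `B` to it changes `∑ sat²` by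
`2ε (sat p v - sat p u) + 2ε² < 0`. So every base in the support meets `X` in exactly
`rnk M X` elements, and as everyone outside `X` is at level `θ`, `θ = rankRatio M X`.

Pareto-efficient distributions are exactly those supported on bases (all bases have the same
size), and a minmax-Pareto distribution cannot have a larger maximum than a Pareto-efficient one.
-/

section Distributions

variable [Fintype α] {sol : Finset α → Prop} {p : Finset α → ℝ}

lemma IsDistrib.mono {sol' : Finset α → Prop} (hp : IsDistrib sol p) (h : ∀ A, sol A → sol' A) :
    IsDistrib sol' p :=
  ⟨hp.1, fun A hA => h A (hp.2.1 A hA), hp.2.2⟩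

lemma IsDistrib.sum_mul_le {g : Finset α → ℝ} {c : ℝ} (hp : IsDistrib sol p)
    (h : ∀ A, p A ≠ 0 → g A ≤ c) : ∑ A, p A * g A ≤ c := by
  calc ∑ A, p A * g A ≤ ∑ A, p A * c := Finset.sum_le_sum fun A _ => by
        rcases eq_or_ne (p A) 0 with hA | hA
        · simp [hA]
        · exact mul_le_mul_of_nonneg_left (h A hA) (hp.1 A)
    _ = c := by rw [← Finset.sum_mul, hp.2.2, one_mul]

lemma IsDistrib.le_sum_mul {g : Finset α → ℝ} {c : ℝ} (hp : IsDistrib sol p)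
    (h : ∀ A, p A ≠ 0 → c ≤ g A) : c ≤ ∑ A, p A * g A := by
  have := hp.sum_mul_le (g := -g) (c := -c) fun A hA => neg_le_neg (h A hA)
  simpa [Finset.sum_neg_distrib] using this

lemma IsDistrib.sum_mul_eq {g : Finset α → ℝ} {c : ℝ} (hp : IsDistrib sol p)
    (h : ∀ A, p A ≠ 0 → g A = c) : ∑ A, p A * g A = c :=
  (hp.sum_mul_le fun A hA => (h A hA).le).antisymm (hp.le_sum_mul fun A hA => (h A hA).ge)

lemma isCompact_setOf_isDistrib (sol : Finset α → Prop) :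
    IsCompact {p | IsDistrib sol p} := by
  have : {p | IsDistrib sol p} = stdSimplex ℝ (Finset α) ∩ ⋂ A ∈ {A | ¬ sol A}, {p | p A = 0} := by
    ext p
    simp only [IsDistrib, stdSimplex, Set.mem_ofPred_eq, Set.mem_inter_iff, Set.mem_iInter]
    refine ⟨fun ⟨h0, hsol, h1⟩ => ⟨⟨h0, h1⟩, fun A hA => by_contra fun h => hA (hsol A h)⟩,
      fun ⟨⟨h0, h1⟩, hsol⟩ => ⟨h0, fun A hA => by_contra fun h => hA (hsol A h), h1⟩⟩
  rw [this]
  exact (isCompact_stdSimplex ℝ _).inter_right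
    (isClosed_biInter fun A _ => isClosed_eq (continuous_apply A) continuous_const)

variable [DecidableEq α]

lemma IsDistrib.transfer (hp : IsDistrib sol p) {B B' : Finset α} (hB' : sol B') {c : ℝ}
    (hc : 0 ≤ c) (hcB : c ≤ p B) : IsDistrib sol (p + Pi.single B' c - Pi.single B c) := by
  have hnonneg : ∀ A, 0 ≤ (p + Pi.single B' c - Pi.single B c : Finset α → ℝ) A := by
    intro A
    simp only [Pi.add_apply, Pi.sub_apply, Pi.single_apply]
    split_ifs with h1 h2 h2 <;> subst_vars <;> linarith [hp.1 A]
  refine ⟨hnonneg, fun A hA => ?_, ?_⟩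
  · rcases eq_or_ne A B' with rfl | hAB'
    · exact hB'
    refine hp.2.1 A fun hpA => hA (le_antisymm ?_ (hnonneg A))
    simp only [Pi.add_apply, Pi.sub_apply, Pi.single_eq_of_ne hAB', hpA, Pi.single_apply]
    split_ifs <;> linarith
  · simp [Finset.sum_add_distrib, Finset.sum_sub_distrib, hp.2.2]

lemma isDistrib_single {B : Finset α} (hB : sol B) : IsDistrib sol (Pi.single B 1) := by
  refine ⟨fun A => ?_, fun A hA => ?_, by simp⟩
  · rw [Pi.single_apply]
    split_ifs <;> norm_num
  · rcases eq_or_ne A B with rfl | hAB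
    · exact hB
    · exact absurd (Pi.single_eq_of_ne hAB 1) hA

lemma sat_eq_sum_filter (p : Finset α → ℝ) (u : α) :
    sat p u = ∑ A ∈ Finset.univ.filter (u ∈ ·), p A :=
  (Finset.sum_filter _ _).symm

lemma continuous_sat (u : α) : Continuous fun p : Finset α → ℝ => sat p u := by
  simp_rw [sat_eq_sum_filter]
  exact continuous_finsetSum _ fun A _ => continuous_apply A

lemma sat_transfer (p : Finset α → ℝ) (B B' : Finset α) (c : ℝ) (w : α) :
    sat (p + Pi.single B' c - Pi.single B c) w
      = sat p w + (if w ∈ B' then c else 0) - (if w ∈ B then c else 0) := by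
  simp [sat_eq_sum_filter, Finset.sum_add_distrib, Finset.sum_sub_distrib, Finset.sum_pi_single']

lemma sum_sat_eq (p : Finset α → ℝ) (T : Finset α) :
    ∑ w ∈ T, sat p w = ∑ A : Finset α, p A * (A ∩ T).card := by
  simp only [sat, Finset.sum_comm (s := T), Finset.sum_ite_mem, Finset.sum_const, nsmul_eq_mul,
    Finset.inter_comm T, mul_comm]

end Distributions

section Pareto

variable [Fintype α] [DecidableEq α] {sol : Finset α → Prop}

lemma sum_sq_add_single_sub_single (f : α → ℝ) {u v : α} (huv : u ≠ v) (ε : ℝ) :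
    ∑ w, (f w + (Pi.single v ε - Pi.single u ε : α → ℝ) w) ^ 2
      = ∑ w, f w ^ 2 + 2 * ε * (f v - f u) + 2 * ε ^ 2 := by
  set d : α → ℝ := Pi.single v ε - Pi.single u ε
  have hd : ∀ w, w ≠ u ∧ w ≠ v → 2 * f w * d w + d w ^ 2 = 0 := fun w ⟨hu, hv⟩ => by
    simp [d, hu, hv]
  calc ∑ w, (f w + d w) ^ 2 = ∑ w, f w ^ 2 + ∑ w, (2 * f w * d w + d w ^ 2) := by
        rw [← Finset.sum_add_distrib]; exact Finset.sum_congr rfl fun w _ => by ring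
    _ = _ := by
        rw [Fintype.sum_eq_add u v huv hd]
        simp [d, huv, huv.symm]
        ring

lemma exists_isMinOn_sum_sq_sat {B : Finset α} (hB : sol B) :
    ∃ p, IsDistrib sol p ∧ IsMinOn (fun q => ∑ w, sat q w ^ 2) {q | IsDistrib sol q} p :=
  (isCompact_setOf_isDistrib sol).exists_isMinOn ⟨_, isDistrib_single hB⟩
    (continuous_finsetSum _ fun u _ => (continuous_sat u).pow 2).continuousOn

lemma sat_le_of_isMinOn_of_exchange {p : Finset α → ℝ} (hp : IsDistrib sol p)
    (hmin : IsMinOn (fun q => ∑ w, sat q w ^ 2) {q | IsDistrib sol q} p)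
    {B : Finset α} (hpB : 0 < p B) {u v : α} (hu : u ∈ B) (hv : v ∉ B)
    (hB' : sol (insert v (B.erase u))) : sat p u ≤ sat p v := by
  by_contra! hlt
  set ε := min (p B) ((sat p u - sat p v) / 2)
  have hε : 0 < ε := lt_min hpB (by linarith)
  have huv : u ≠ v := ne_of_mem_of_not_mem hu hv
  have hsat : ∀ w, sat (p + Pi.single (insert v (B.erase u)) ε - Pi.single B ε) w
      = sat p w + (Pi.single v ε - Pi.single u ε : α → ℝ) w := by
    intro w
    rw [sat_transfer]
    rcases eq_or_ne w v with rfl | hwv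
    · simp [hv, huv.symm]
    rcases eq_or_ne w u with rfl | hwu
    · simp [hu, huv, sub_eq_add_neg]
    simp [hwv, hwu]
  have hle := isMinOn_iff.1 hmin _ (hp.transfer hB' hε.le (min_le_left _ _))
  simp only [hsat, sum_sq_add_single_sub_single _ huv] at hle
  nlinarith [min_le_right (p B) ((sat p u - sat p v) / 2)]

lemma ParetoEff.eq_of_subset {F : Finset α → ℝ} (hF : ParetoEff sol F) {A B : Finset α}
    (hA : F A ≠ 0) (hB : sol B) (hAB : A ⊆ B) : A = B := by
  by_contra hne
  obtain ⟨w, hwB, hwA⟩ := Finset.exists_of_ssubset (hAB.ssubset_of_ne hne)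
  have hc : 0 < F A := (hF.1.1 A).lt_of_ne' hA
  refine hF.2 ⟨F + Pi.single B (F A) - Pi.single A (F A), hF.1.transfer hB hc.le le_rfl,
    fun u => ?_, w, ?_⟩
  · rw [sat_transfer]
    by_cases hu : u ∈ A
    · simp [hu, hAB hu]
    · simp only [hu, if_false, sub_zero]
      split_ifs <;> linarith
  · rw [sat_transfer]
    simp [hwB, hwA, hc]

lemma IsDistrib.paretoEff_of_card {D : Finset α → ℝ} {r : ℕ} (hD : IsDistrib sol D)
    (hsol : ∀ A, sol A → A.card ≤ r) (hD_card : ∀ A, D A ≠ 0 → A.card = r) :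
    ParetoEff sol D := by
  refine ⟨hD, fun ⟨D', hD', hle, u, hlt⟩ => ?_⟩
  have hsum (q : Finset α → ℝ) : ∑ w, sat q w = ∑ A, q A * A.card := by
    simpa using sum_sat_eq q Finset.univ
  have h1 : ∑ w, sat D w = r := by
    rw [hsum]
    exact hD.sum_mul_eq fun A hA => by rw [hD_card A hA]
  have h2 : ∑ w, sat D' w ≤ r := by
    rw [hsum]
    exact hD'.sum_mul_le fun A hA => by exact_mod_cast hsol A (hD'.2.1 A hA)
  have h3 : ∑ w, sat D w < ∑ w, sat D' w :=
    Finset.sum_lt_sum (fun w _ => hle w) ⟨u, Finset.mem_univ u, hlt⟩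
  linarith

lemma MinmaxPareto.iSup_sat_le [Nonempty α] {F D : Finset α → ℝ} (hF : MinmaxPareto sol F)
    (hD : ParetoEff sol D) : ⨆ u, sat F u ≤ ⨆ u, sat D u := by
  by_contra! hlt
  obtain ⟨u, hu⟩ := exists_eq_ciSup_of_finite (f := sat F)
  have hbdd := Finite.bddAbove_range (sat D)
  obtain ⟨v, hDv, hFuv⟩ := hF.2 D hD u (by rw [hu]; exact (le_ciSup hbdd u).trans_lt hlt)
  linarith [le_ciSup hbdd v]

end Pareto

lemma Matroid.IsBase.exists_exchange_of_insert_indep {M : Matroid α} {B I : Set α} {v : α}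
    (hB : M.IsBase B) (hIB : I ⊆ B) (hvB : v ∉ B) (hI : M.Indep (insert v I)) :
    ∃ u ∈ B \ I, M.IsBase (insert v (B \ {u})) := by
  obtain ⟨B', hB', hIB', hB'sub⟩ := hI.exists_isBase_subset_union_isBase hB
  have hvB' : v ∈ B' := hIB' (Set.mem_insert v I)
  obtain ⟨u, huB, huB'⟩ : ∃ u ∈ B, u ∉ B' := by
    by_contra! h
    exact hvB ((hB.eq_of_subset_isBase hB' h) ▸ hvB')
  obtain ⟨y, ⟨hyB', hyB⟩, hbase⟩ := hB.exchange hB' ⟨huB, huB'⟩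
  have hyv : y = v := by
    rcases hB'sub hyB' with (rfl | hyI) | hy
    · rfl
    · exact absurd (hIB hyI) hyB
    · exact absurd hy hyB
  exact ⟨u, ⟨huB, fun hu => huB' (hIB' (Set.mem_insert_of_mem v hu))⟩, hyv ▸ hbase⟩

section Matroid

variable [Fintype α] {M : Matroid α}

lemma card_le_rnk {J X : Finset α} (hJX : J ⊆ X) (hJ : M.Indep (J : Set α)) :
    J.card ≤ rnk M X :=
  Finset.le_sup (Finset.mem_filter.2 ⟨Finset.mem_powerset.2 hJX, hJ⟩)

lemma exists_subset_indep_card_eq_rnk (M : Matroid α) (X : Finset α) :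
    ∃ J ⊆ X, M.Indep (J : Set α) ∧ J.card = rnk M X := by
  obtain ⟨J, hJ, hJcard⟩ := Finset.exists_mem_eq_sup
    (X.powerset.filter fun A : Finset α => M.Indep (A : Set α)) ⟨∅, by simp⟩ Finset.card
  rw [Finset.mem_filter, Finset.mem_powerset] at hJ
  exact ⟨J, hJ.1, hJ.2, hJcard.symm⟩

lemma isBaseF_iff {A : Finset α} : IsBaseF M A ↔ M.IsBase (A : Set α) := by
  rw [Matroid.isBase_iff_maximal_indep, maximal_subset_iff]
  refine ⟨fun ⟨hA, hmax⟩ => ⟨hA, fun I hI hAI => ?_⟩,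
    fun ⟨hA, hmax⟩ => ⟨hA, fun B hB hAB => Finset.coe_injective (hmax hB (by simpa))⟩⟩
  have hIfin := Set.toFinite I
  rw [← hIfin.coe_toFinset] at hI hAI ⊢
  rw [hmax _ hI (Finset.coe_subset.1 hAI)]

lemma exists_isBaseF (M : Matroid α) : ∃ B : Finset α, IsBaseF M B := by
  obtain ⟨B, hB⟩ := M.exists_isBase
  exact ⟨(Set.toFinite B).toFinset, isBaseF_iff.2 (by rwa [Set.Finite.coe_toFinset])⟩

lemma IsBaseF.card_eq_rnk_univ {B : Finset α} (hB : IsBaseF M B) :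
    B.card = rnk M Finset.univ := by
  refine (card_le_rnk (Finset.subset_univ B) hB.1).antisymm (Finset.sup_le fun J hJ => ?_)
  obtain ⟨B', hB', hJB'⟩ := (Finset.mem_filter.1 hJ).2.exists_isBase_superset
  have := Set.encard_le_encard hJB'
  rwa [hB'.encard_eq_encard_of_isBase (isBaseF_iff.1 hB), Set.encard_coe_eq_coe_finsetCard,
    Set.encard_coe_eq_coe_finsetCard, Nat.cast_le] at this

variable [DecidableEq α]

lemma IsBaseF.card_inter_le_rnk {B : Finset α} (hB : IsBaseF M B) (X : Finset α) :
    (B ∩ X).card ≤ rnk M X :=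
  card_le_rnk Finset.inter_subset_right (hB.1.subset (by simp))

lemma IsBaseF.card_inter_sdiff {B : Finset α} (hB : IsBaseF M B) (X : Finset α) :
    ((B ∩ (Finset.univ \ X)).card : ℝ) = rnk M Finset.univ - (B ∩ X).card := by
  rw [← hB.card_eq_rnk_univ, ← Finset.card_sdiff_add_card_inter B X,
    ← Finset.compl_eq_univ_sdiff, ← Finset.sdiff_eq_inter_compl]
  push_cast
  ring

lemma IsBaseF.exists_exchange_of_card_inter_lt {B X : Finset α} (hB : IsBaseF M B)
    (h : (B ∩ X).card < rnk M X) :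
    ∃ u ∈ B, u ∉ X ∧ ∃ v ∈ X, v ∉ B ∧ IsBaseF M (insert v (B.erase u)) := by
  obtain ⟨J, hJX, hJ, hJcard⟩ := exists_subset_indep_card_eq_rnk M X
  obtain ⟨v, hvJ, hvBX, hind⟩ :=
    (hB.1.subset (by simp) : M.Indep ((B ∩ X : Finset α) : Set α)).augment_finset hJ
      (hJcard ▸ h)
  have hvB : v ∉ B := fun hv => hvBX (Finset.mem_inter.2 ⟨hv, hJX hvJ⟩)
  obtain ⟨u, ⟨huB, huBX⟩, hbase⟩ :=
    (isBaseF_iff.1 hB).exists_exchange_of_insert_indep (by simp) hvB hind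
  refine ⟨u, huB, fun huX => huBX (by simp [huB, huX]), v, hJX hvJ, hvB, isBaseF_iff.2 ?_⟩
  simpa [Finset.coe_erase] using hbase

end Matroid

section MinMax

variable [Fintype α] [DecidableEq α] {M : Matroid α}

noncomputable def rankRatio (M : Matroid α) (X : Finset α) : ℝ :=
  ((rnk M Finset.univ : ℝ) - (rnk M X : ℝ)) / ((Finset.univ \ X).card : ℝ)

lemma rankRatio_le_iSup_sat {D : Finset α → ℝ} (hD : IsDistrib (IsBaseF M) D) {X : Finset α}
    (hX : X ⊂ Finset.univ) : rankRatio M X ≤ ⨆ u, sat D u := by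
  have hcard : (0 : ℝ) < (Finset.univ \ X).card := by
    exact_mod_cast Finset.card_pos.2 (Finset.sdiff_nonempty.2 (not_subset_of_ssubset hX))
  rw [rankRatio, div_le_iff₀ hcard]
  calc (rnk M Finset.univ : ℝ) - rnk M X
      ≤ ∑ A, D A * (A ∩ (Finset.univ \ X)).card := hD.le_sum_mul fun A hA => by
        rw [(hD.2.1 A hA).card_inter_sdiff]
        exact sub_le_sub_left (by exact_mod_cast (hD.2.1 A hA).card_inter_le_rnk X) _
    _ = ∑ w ∈ Finset.univ \ X, sat D w := (sum_sat_eq D _).symm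
    _ ≤ ∑ _w ∈ Finset.univ \ X, ⨆ u, sat D u :=
        Finset.sum_le_sum fun w _ => le_ciSup (Finite.bddAbove_range _) w
    _ = (⨆ u, sat D u) * (Finset.univ \ X).card := by
        rw [Finset.sum_const, nsmul_eq_mul, mul_comm]

lemma card_inter_eq_rnk_of_isMinOn {p : Finset α → ℝ} (hp : IsDistrib (IsBaseF M) p)
    (hmin : IsMinOn (fun q => ∑ w, sat q w ^ 2) {q | IsDistrib (IsBaseF M) q} p) (θ : ℝ)
    {B : Finset α} (hB : p B ≠ 0) :
    (B ∩ Finset.univ.filter (sat p · < θ)).card = rnk M (Finset.univ.filter (sat p · < θ)) := by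
  refine ((hp.2.1 B hB).card_inter_le_rnk _).antisymm (not_lt.1 fun hlt => ?_)
  obtain ⟨u, huB, huX, v, hvX, hvB, hB'⟩ := (hp.2.1 B hB).exists_exchange_of_card_inter_lt hlt
  have huv := sat_le_of_isMinOn_of_exchange hp hmin ((hp.1 B).lt_of_ne' hB) huB hvB hB'
  simp only [Finset.mem_filter, Finset.mem_univ, true_and, not_lt] at huX hvX
  linarith

lemma exists_isDistrib_iSup_sat_eq_rankRatio [Nonempty α] (M : Matroid α) :
    ∃ p X, IsDistrib (IsBaseF M) p ∧ X ⊂ Finset.univ ∧ ⨆ u, sat p u = rankRatio M X := by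
  obtain ⟨B₀, hB₀⟩ := exists_isBaseF M
  obtain ⟨p, hp, hmin⟩ := exists_isMinOn_sum_sq_sat hB₀
  obtain ⟨u₀, hu₀⟩ := exists_eq_ciSup_of_finite (f := sat p)
  set θ := ⨆ u, sat p u
  have hθ : ∀ w, sat p w ≤ θ := le_ciSup (Finite.bddAbove_range _)
  set X := Finset.univ.filter (sat p · < θ)
  have hu₀X : u₀ ∉ X := by simp [X, hu₀]
  have hcard : (0 : ℝ) < (Finset.univ \ X).card := by
    exact_mod_cast Finset.card_pos.2 ⟨u₀, by simp [hu₀X]⟩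
  refine ⟨p, X, hp, Finset.ssubset_univ_iff.2 fun h => hu₀X (h ▸ Finset.mem_univ _), ?_⟩
  rw [rankRatio, eq_div_iff hcard.ne']
  calc θ * (Finset.univ \ X).card = ∑ w ∈ Finset.univ \ X, sat p w := by
        rw [Finset.sum_congr rfl fun w hw => (hθ w).antisymm (by simpa [X] using hw),
          Finset.sum_const, nsmul_eq_mul, mul_comm]
    _ = ∑ A, p A * (A ∩ (Finset.univ \ X)).card := sum_sat_eq p _
    _ = _ := hp.sum_mul_eq fun A hA => by
        rw [(hp.2.1 A hA).card_inter_sdiff, card_inter_eq_rnk_of_isMinOn hp hmin θ hA]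

lemma ParetoEff.isDistrib_isBaseF {F : Finset α → ℝ}
    (hF : ParetoEff (fun A : Finset α => M.Indep (A : Set α)) F) : IsDistrib (IsBaseF M) F :=
  ⟨hF.1.1, fun A hA => ⟨hF.1.2.1 A hA, fun _ hB hAB => hF.eq_of_subset hA hB hAB⟩, hF.1.2.2⟩

lemma IsDistrib.paretoEff_indep {D : Finset α → ℝ} (hD : IsDistrib (IsBaseF M) D) :
    ParetoEff (fun A : Finset α => M.Indep (A : Set α)) D :=
  (hD.mono fun _ hA => hA.1).paretoEff_of_card (fun A hA => card_le_rnk (Finset.subset_univ A) hA)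
    fun A hA => (hD.2.1 A hA).card_eq_rnk_univ

end MinMax

theorem minmax_value_matroid_general [Fintype α] [DecidableEq α] [Nonempty α]
    (M : Matroid α) :
    IsLeast
      {x : ℝ | ∃ D, IsDistrib (IsBaseF M) D ∧ x = ⨆ u : α, sat D u}
      (sSup {x : ℝ | ∃ X : Finset α, X ⊂ Finset.univ ∧
        x = ((rnk M Finset.univ : ℝ) - (rnk M X : ℝ)) / ((Finset.univ \ X).card : ℝ)}) ∧
    ∀ F, MinmaxPareto (fun A : Finset α => M.Indep (A : Set α)) F →
      (⨆ u : α, sat F u) =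
        sSup {x : ℝ | ∃ X : Finset α, X ⊂ Finset.univ ∧
          x = ((rnk M Finset.univ : ℝ) - (rnk M X : ℝ)) / ((Finset.univ \ X).card : ℝ)} := by
  set R := {x : ℝ | ∃ X : Finset α, X ⊂ Finset.univ ∧
    x = ((rnk M Finset.univ : ℝ) - (rnk M X : ℝ)) / ((Finset.univ \ X).card : ℝ)}
  have hbdd : BddAbove R := (Set.finite_range (rankRatio M)).bddAbove.mono <| by
    rintro _ ⟨X, -, rfl⟩
    exact ⟨X, rfl⟩
  have hlb : ∀ D, IsDistrib (IsBaseF M) D → sSup R ≤ ⨆ u, sat D u :=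
    fun D hD => csSup_le ⟨_, ∅, Finset.empty_ssubset.2 Finset.univ_nonempty, rfl⟩ <| by
      rintro _ ⟨X, hX, rfl⟩
      exact rankRatio_le_iSup_sat hD hX
  obtain ⟨p, X, hp, hX, hpX⟩ := exists_isDistrib_iSup_sat_eq_rankRatio M
  have hopt : sSup R = ⨆ u, sat p u := (hlb p hp).antisymm (le_csSup hbdd ⟨X, hX, hpX⟩)
  refine ⟨⟨⟨p, hp, hopt⟩, ?_⟩, fun F hF => ?_⟩
  · rintro _ ⟨D, hD, rfl⟩
    exact hlb D hD
  · exact ((hF.iSup_sat_le hp.paretoEff_indep).trans hopt.ge).antisymm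
      (hlb F hF.1.isDistrib_isBaseF)

/-- Let `M` be a matroid on a finite nonempty ground set (the whole type `α`).  The
minimum, over all distributions `D` on the bases of `M`, of the maximum satisfaction
probability `⨆ u, sat D u` equals
`max { (rnk M univ − rnk M X) / |univ \ X| : X ⊊ univ }`; and this value is the maximum
satisfaction probability of any minmax-Pareto distribution over the independent sets
of `M`. -/
theorem minmax_value_matroid [Fintype α] [DecidableEq α] [Nonempty α]
    (M : Matroid α) (hE : M.E = Set.univ) :
    IsLeast
      {x : ℝ | ∃ D, IsDistrib (IsBaseF M) D ∧ x = ⨆ u : α, sat D u}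
      (sSup {x : ℝ | ∃ X : Finset α, X ⊂ Finset.univ ∧
        x = ((rnk M Finset.univ : ℝ) - (rnk M X : ℝ)) / ((Finset.univ \ X).card : ℝ)}) ∧
    ∀ F, MinmaxPareto (fun A : Finset α => M.Indep (A : Set α)) F →
      (⨆ u : α, sat F u) =
        sSup {x : ℝ | ∃ X : Finset α, X ⊂ Finset.univ ∧
          x = ((rnk M Finset.univ : ℝ) - (rnk M X : ℝ)) / ((Finset.univ \ X).card : ℝ)} :=
  minmax_value_matroid_general M
end

section
/- Let G be a finite bipartite graph with bipartition (L, R), L nonempty, such that the size ρ(L) of a maximum matching of G equals |Γ(L)|. Then for every maxmin-fair distribution F of matchings of G, the maximum coverage probability max_{u∈L} F[u] equals max{ (|Γ(L)| − |Γ(S)|)/|L \ S| : S ⊊ L }. -/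
/-!
A finite bipartite graph with bipartition `(L, R)` is modelled by its edge set
`E : Finset (L × R)`, where `L` and `R` are finite types.  A matching is a subset of `E`
in which no two distinct edges share an endpoint.  `nbhd E S` is the set `Γ(S)` of
neighbours in `R` of a set `S ⊆ L` of left vertices.  A distribution of matchings is a
nonnegative function on `Finset (L × R)`, supported on matchings, summing to `1`;
`covP p u` is the probability that the left vertex `u` is covered by the random matching.
-/

variable {L R : Type*}

/-- `M` is a matching of the bipartite graph with edge set `E`. -/
def IsMatching [DecidableEq L] [DecidableEq R]
    (E M : Finset (L × R)) : Prop :=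
  M ⊆ E ∧ ∀ e ∈ M, ∀ f ∈ M, e ≠ f → e.1 ≠ f.1 ∧ e.2 ≠ f.2

/-- The neighbourhood `Γ(S) ⊆ R` of a set `S ⊆ L` of left vertices. -/
def nbhd [DecidableEq L] [DecidableEq R] (E : Finset (L × R)) (S : Finset L) : Finset R :=
  (E.filter (fun e => e.1 ∈ S)).image Prod.snd

/-- `p` is a probability distribution over the matchings of the graph with edge set `E`. -/
def IsDistribM [Fintype L] [Fintype R] [DecidableEq L] [DecidableEq R]
    (E : Finset (L × R)) (p : Finset (L × R) → ℝ) : Prop :=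
  (∀ M, 0 ≤ p M) ∧ (∀ M, p M ≠ 0 → IsMatching E M) ∧ (∑ M : Finset (L × R), p M) = 1

/-- The coverage (satisfaction) probability of the left vertex `u` under the
distribution of matchings `p`. -/
def covP [Fintype L] [Fintype R] [DecidableEq L] [DecidableEq R]
    (p : Finset (L × R) → ℝ) (u : L) : ℝ :=
  ∑ M : Finset (L × R), if u ∈ M.image Prod.fst then p M else 0

/-- `F` is a maxmin-fair distribution of matchings for the one-sided bipartite matching
problem (the users are the left vertices `L`). -/
def MaxminFairM [Fintype L] [Fintype R] [DecidableEq L] [DecidableEq R]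
    (E : Finset (L × R)) (F : Finset (L × R) → ℝ) : Prop :=
  IsDistribM E F ∧
    ∀ D, IsDistribM E D → ∀ u : L, covP F u < covP D u →
      ∃ v : L, covP D v < covP F v ∧ covP F v ≤ covP F u

open scoped Classical

/-- The maximum matching size `ρ(L)` of the bipartite graph with edge set `E`. -/
noncomputable def matchNum [Fintype L] [Fintype R] [DecidableEq L] [DecidableEq R]
    (E : Finset (L × R)) : ℕ :=
  ((Finset.univ : Finset (Finset (L × R))).filter (IsMatching E)).sup Finset.card

section Comb
variable [DecidableEq L] [DecidableEq R] (E : Finset (L × R))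

/-- Hall condition for a set of left vertices. -/
def HallOn (A : Finset L) : Prop := ∀ T ⊆ A, T.card ≤ (nbhd E T).card

variable {E}

lemma mem_nbhd {S : Finset L} {r : R} :
    r ∈ nbhd E S ↔ ∃ e ∈ E, e.1 ∈ S ∧ e.2 = r := by
  simp only [nbhd, Finset.mem_image, Finset.mem_filter]
  tauto

lemma nbhd_mono {S T : Finset L} (h : S ⊆ T) : nbhd E S ⊆ nbhd E T := by
  intro r hr
  rw [mem_nbhd] at hr ⊢
  obtain ⟨e, he, h1, h2⟩ := hr
  exact ⟨e, he, h h1, h2⟩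

lemma nbhd_union (S T : Finset L) : nbhd E (S ∪ T) = nbhd E S ∪ nbhd E T := by
  ext r
  simp only [Finset.mem_union, mem_nbhd]
  constructor
  · rintro ⟨e, he, hS | hT, rfl⟩
    · exact Or.inl ⟨e, he, hS, rfl⟩
    · exact Or.inr ⟨e, he, hT, rfl⟩
  · rintro (⟨e, he, hS, rfl⟩ | ⟨e, he, hS, rfl⟩)
    · exact ⟨e, he, Or.inl hS, rfl⟩
    · exact ⟨e, he, Or.inr hS, rfl⟩

lemma nbhd_empty : nbhd E (∅ : Finset L) = ∅ := by
  simp [nbhd]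

lemma hallOn_subset {A B : Finset L} (h : A ⊆ B) (hB : HallOn E B) : HallOn E A :=
  fun T hT => hB T (hT.trans h)

lemma hallOn_empty : HallOn E (∅ : Finset L) := by
  intro T hT
  simp [Finset.subset_empty.1 hT]

/-- Core lemma: if no element of `X` can be added to the Hall set `A` keeping the Hall
condition, then there is `W ⊆ A` with `|Γ(W ∪ X)| ≤ |W|`. -/
lemma core_lemma {A : Finset L} (hA : HallOn E A) (X : Finset L)
    (hX : ∀ x ∈ X, x ∉ A ∧ ¬ HallOn E (insert x A)) :
    ∃ W ⊆ A, (nbhd E (W ∪ X)).card ≤ W.card := by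
  induction X using Finset.induction_on with
  | empty => exact ⟨∅, Finset.empty_subset _, by simp [nbhd_empty]⟩
  | @insert x X hxX ih =>
    obtain ⟨W, hWA, hW⟩ := ih (fun y hy => hX y (Finset.mem_insert_of_mem hy))
    obtain ⟨hxA, hxH⟩ := hX x (Finset.mem_insert_self x X)
    rw [HallOn] at hxH
    push_neg at hxH
    obtain ⟨T, hTsub, hT⟩ := hxH
    have hxT : x ∈ T := by
      by_contra hx
      have hTA : T ⊆ A := fun y hy => by
        rcases Finset.mem_insert.1 (hTsub hy) with rfl | h
        · exact absurd hy hx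
        · exact h
      exact absurd (hA T hTA) (not_le.2 hT)
    set T' := T.erase x with hT'def
    have hT'A : T' ⊆ A := by
      intro y hy
      have hyx : y ≠ x := Finset.ne_of_mem_erase hy
      rcases Finset.mem_insert.1 (hTsub (Finset.mem_of_mem_erase hy)) with rfl | h
      · exact absurd rfl hyx
      · exact h
    have hxT' : x ∉ T' := Finset.notMem_erase x T
    have hTeq : T = insert x T' := (Finset.insert_erase hxT).symm
    have hcardT : T.card = T'.card + 1 := by
      rw [hTeq, Finset.card_insert_of_notMem hxT']
    have hQ : (nbhd E (insert x T')).card ≤ T'.card := by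
      rw [← hTeq]; omega
    refine ⟨W ∪ T', Finset.union_subset hWA hT'A, ?_⟩
    have hXA : ∀ y ∈ X, y ∉ A := fun y hy => (hX y (Finset.mem_insert_of_mem hy)).1
    have hseteq : (W ∪ T') ∪ insert x X = (W ∪ X) ∪ insert x T' := by
      ext y
      simp only [Finset.mem_union, Finset.mem_insert]
      tauto
    have hinter : W ∩ T' ⊆ (W ∪ X) ∩ insert x T' := by
      intro y hy
      rw [Finset.mem_inter] at hy ⊢
      exact ⟨Finset.mem_union_left _ hy.1, Finset.mem_insert_of_mem hy.2⟩
    have key : (nbhd E ((W ∪ X) ∪ insert x T')).card + (W ∩ T').card ≤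
        W.card + T'.card := by
      have h1 : (nbhd E ((W ∪ X) ∪ insert x T')).card +
          (nbhd E (W ∪ X) ∩ nbhd E (insert x T')).card =
          (nbhd E (W ∪ X)).card + (nbhd E (insert x T')).card := by
        rw [nbhd_union]
        exact Finset.card_union_add_card_inter _ _
      have h2 : (W ∩ T').card ≤ (nbhd E (W ∪ X) ∩ nbhd E (insert x T')).card := by
        calc (W ∩ T').card ≤ (nbhd E (W ∩ T')).card :=
              hA _ (Finset.inter_subset_left.trans hWA)
          _ ≤ ((nbhd E (W ∪ X)) ∩ nbhd E (insert x T')).card := by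
              apply Finset.card_le_card
              intro r hr
              rw [Finset.mem_inter]
              exact ⟨nbhd_mono (Finset.inter_subset_left.trans Finset.subset_union_left) hr,
                nbhd_mono (Finset.inter_subset_right.trans (Finset.subset_insert x T')) hr⟩
      omega
    have hcardU : (W ∪ T').card + (W ∩ T').card = W.card + T'.card :=
      Finset.card_union_add_card_inter _ _
    rw [hseteq]
    omega

/-- Augmentation: a Hall set smaller than another Hall set can be extended inside it. -/
lemma aug_lemma {A B : Finset L} (hA : HallOn E A) (hB : HallOn E B)
    (h : A.card < B.card) : ∃ x ∈ B, x ∉ A ∧ HallOn E (insert x A) := by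
  by_contra hcon
  push_neg at hcon
  obtain ⟨W, hWA, hW⟩ := core_lemma hA (B \ A) (fun x hx => by
    rw [Finset.mem_sdiff] at hx
    exact ⟨hx.2, hcon x hx.1 hx.2⟩)
  have hV : ((B \ A) ∪ (W ∩ B)).card ≤ W.card := by
    calc ((B \ A) ∪ (W ∩ B)).card ≤ (nbhd E ((B \ A) ∪ (W ∩ B))).card := by
          apply hB
          intro y hy
          rcases Finset.mem_union.1 hy with h' | h'
          · exact (Finset.mem_sdiff.1 h').1
          · exact (Finset.mem_inter.1 h').2
      _ ≤ (nbhd E (W ∪ (B \ A))).card := by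
          apply Finset.card_le_card
          apply nbhd_mono
          intro y hy
          rcases Finset.mem_union.1 hy with h' | h'
          · exact Finset.mem_union_right _ h'
          · exact Finset.mem_union_left _ (Finset.mem_inter.1 h').1
      _ ≤ W.card := hW
  have hdisj : Disjoint (B \ A) (W ∩ B) := by
    rw [Finset.disjoint_left]
    intro y hy hy'
    exact (Finset.mem_sdiff.1 hy).2 (hWA (Finset.mem_inter.1 hy').1)
  have hVcard : ((B \ A) ∪ (W ∩ B)).card = (B \ A).card + (W ∩ B).card :=
    Finset.card_union_of_disjoint hdisj
  have hWsplit : (W \ B).card + (W ∩ B).card = W.card := Finset.card_sdiff_add_card_inter _ _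
  have hWB : (W \ B).card ≤ (A \ B).card :=
    Finset.card_le_card (fun y hy => Finset.mem_sdiff.2
      ⟨hWA (Finset.mem_sdiff.1 hy).1, (Finset.mem_sdiff.1 hy).2⟩)
  have hBsplit : (B \ A).card + (B ∩ A).card = B.card := Finset.card_sdiff_add_card_inter _ _
  have hAsplit : (A \ B).card + (A ∩ B).card = A.card := Finset.card_sdiff_add_card_inter _ _
  have : (B ∩ A).card = (A ∩ B).card := by rw [Finset.inter_comm]
  omega

/-- Rank witness: if `A` is a maximum Hall subset of `S` then there is `T ⊆ S` with
`|Γ(T)| + |S \ T| ≤ |A|`. -/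
lemma tight_lemma {S A : Finset L} (hAS : A ⊆ S) (hA : HallOn E A)
    (hmax : ∀ A' ⊆ S, HallOn E A' → A'.card ≤ A.card) :
    ∃ T ⊆ S, (nbhd E T).card + (S \ T).card ≤ A.card := by
  obtain ⟨W, hWA, hW⟩ := core_lemma hA (S \ A) (fun x hx => by
    rw [Finset.mem_sdiff] at hx
    refine ⟨hx.2, fun hH => ?_⟩
    have : (insert x A).card ≤ A.card :=
      hmax _ (Finset.insert_subset hx.1 hAS) hH
    rw [Finset.card_insert_of_notMem hx.2] at this
    omega)
  refine ⟨W ∪ (S \ A), Finset.union_subset (hWA.trans hAS) Finset.sdiff_subset, ?_⟩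
  have hSdiff : S \ (W ∪ (S \ A)) = A \ W := by
    ext y
    simp only [Finset.mem_sdiff, Finset.mem_union, Finset.mem_sdiff]
    constructor
    · rintro ⟨hyS, hy⟩
      push_neg at hy
      exact ⟨(hy.2 hyS : y ∈ A), hy.1⟩
    · rintro ⟨hyA, hyW⟩
      refine ⟨hAS hyA, ?_⟩
      push_neg
      exact ⟨hyW, fun _ => hyA⟩
  rw [hSdiff]
  have := Finset.card_sdiff_add_card_eq_card hWA
  omega

lemma match_injOn_fst {M : Finset (L × R)} (hM : IsMatching E M) :
    Set.InjOn Prod.fst (M : Set (L × R)) := by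
  intro e he f hf hef
  by_contra hne
  exact ((hM.2 e he f hf hne).1) hef

lemma match_injOn_snd {M : Finset (L × R)} (hM : IsMatching E M) :
    Set.InjOn Prod.snd (M : Set (L × R)) := by
  intro e he f hf hef
  by_contra hne
  exact ((hM.2 e he f hf hne).2) hef

lemma card_cov {M : Finset (L × R)} (hM : IsMatching E M) :
    (M.image Prod.fst).card = M.card :=
  Finset.card_image_of_injOn (match_injOn_fst hM)

/-- Covered part of `A` is at most `|Γ(A)|`. -/
lemma card_inter_cov_le {M : Finset (L × R)} (hM : IsMatching E M) (A : Finset L) :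
    (A ∩ M.image Prod.fst).card ≤ (nbhd E A).card := by
  have h1 : A ∩ M.image Prod.fst = (M.filter (fun e => e.1 ∈ A)).image Prod.fst := by
    ext u
    simp only [Finset.mem_inter, Finset.mem_image, Finset.mem_filter]
    constructor
    · rintro ⟨hu, e, he, rfl⟩
      exact ⟨e, ⟨he, hu⟩, rfl⟩
    · rintro ⟨e, ⟨he, hu⟩, rfl⟩
      exact ⟨hu, e, he, rfl⟩
  have h2 : ((M.filter (fun e => e.1 ∈ A)).image Prod.fst).card =
      (M.filter (fun e => e.1 ∈ A)).card :=
    Finset.card_image_of_injOn ((match_injOn_fst hM).mono (by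
      intro e he; exact Finset.mem_of_mem_filter e he))
  have h3 : (M.filter (fun e => e.1 ∈ A)).card =
      ((M.filter (fun e => e.1 ∈ A)).image Prod.snd).card :=
    (Finset.card_image_of_injOn ((match_injOn_snd hM).mono (by
      intro e he; exact Finset.mem_of_mem_filter e he))).symm
  have h4 : (M.filter (fun e => e.1 ∈ A)).image Prod.snd ⊆ nbhd E A := by
    intro r hr
    rw [Finset.mem_image] at hr
    obtain ⟨e, he, rfl⟩ := hr
    rw [Finset.mem_filter] at he
    exact mem_nbhd.2 ⟨e, hM.1 he.1, he.2, rfl⟩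
  rw [h1, h2, h3]
  exact Finset.card_le_card h4

lemma hallOn_cov {M : Finset (L × R)} (hM : IsMatching E M) :
    HallOn E (M.image Prod.fst) := by
  intro T hT
  have : T ∩ M.image Prod.fst = T := Finset.inter_eq_left.2 hT
  calc T.card = (T ∩ M.image Prod.fst).card := by rw [this]
    _ ≤ (nbhd E T).card := card_inter_cov_le hM T

/-- Hall's theorem: a Hall set can be covered by a matching. -/
lemma matching_of_hallOn {A : Finset L} (hA : HallOn E A) :
    ∃ M, IsMatching E M ∧ A ⊆ M.image Prod.fst := by
  have hall : ∀ s : Finset {x // x ∈ A},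
      s.card ≤ (s.biUnion (fun x => nbhd E {x.val})).card := by
    intro s
    have hs : (s.image Subtype.val).card = s.card :=
      Finset.card_image_of_injective _ Subtype.val_injective
    have hbU : s.biUnion (fun x => nbhd E {x.val}) = nbhd E (s.image Subtype.val) := by
      ext r
      simp only [Finset.mem_biUnion, mem_nbhd, Finset.mem_singleton, Finset.mem_image]
      constructor
      · rintro ⟨x, hx, e, he, h1, rfl⟩
        exact ⟨e, he, ⟨x, hx, h1.symm⟩, rfl⟩
      · rintro ⟨e, he, ⟨x, hx, hxe⟩, rfl⟩
        exact ⟨x, hx, e, he, hxe.symm, rfl⟩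
    rw [hbU, ← hs]
    exact hA _ (by intro y hy; obtain ⟨x, _, rfl⟩ := Finset.mem_image.1 hy; exact x.2)
  obtain ⟨f, hfinj, hf⟩ := (Finset.all_card_le_biUnion_card_iff_exists_injective _).1 hall
  refine ⟨A.attach.image (fun x => (x.val, f x)), ⟨?_, ?_⟩, ?_⟩
  · intro e he
    rw [Finset.mem_image] at he
    obtain ⟨x, _, rfl⟩ := he
    have := hf x
    rw [mem_nbhd] at this
    obtain ⟨e', he', h1, h2⟩ := this
    rw [Finset.mem_singleton] at h1
    have : e' = (x.val, f x) := Prod.ext h1 h2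
    rwa [← this]
  · intro e he g hg hne
    rw [Finset.mem_image] at he hg
    obtain ⟨x, _, rfl⟩ := he
    obtain ⟨y, _, rfl⟩ := hg
    have hxy : x ≠ y := fun h => hne (by rw [h])
    constructor
    · simp only [ne_eq]
      exact fun h => hxy (Subtype.ext h)
    · simp only [ne_eq]
      exact fun h => hxy (hfinj h)
  · intro u hu
    rw [Finset.mem_image]
    exact ⟨(u, f ⟨u, hu⟩), Finset.mem_image.2 ⟨⟨u, hu⟩, Finset.mem_attach _ _, rfl⟩, rfl⟩

lemma empty_isMatching : IsMatching E (∅ : Finset (L × R)) :=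
  ⟨Finset.empty_subset _, fun e he => absurd he (Finset.notMem_empty e)⟩

section Prob
variable [Fintype L] [Fintype R]

lemma covP_nonneg {D : Finset (L × R) → ℝ} (h0 : ∀ M, 0 ≤ D M) (u : L) :
    0 ≤ covP D u :=
  Finset.sum_nonneg (fun M _ => by split <;> [exact h0 M; exact le_refl 0])

lemma covP_le_one {D : Finset (L × R) → ℝ} (h0 : ∀ M, 0 ≤ D M)
    (hsum : (∑ M : Finset (L × R), D M) = 1) (u : L) : covP D u ≤ 1 := by
  rw [← hsum]
  apply Finset.sum_le_sum
  intro M _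
  split
  · exact le_refl _
  · exact h0 M

lemma sum_covP (D : Finset (L × R) → ℝ) (A : Finset L) :
    ∑ u ∈ A, covP D u = ∑ M : Finset (L × R), D M * ((A ∩ M.image Prod.fst).card : ℝ) := by
  unfold covP
  rw [Finset.sum_comm]
  apply Finset.sum_congr rfl
  intro M _
  rw [← Finset.sum_filter, Finset.filter_mem_eq_inter, Finset.sum_const, nsmul_eq_mul, mul_comm]

lemma sum_covP_le {D : Finset (L × R) → ℝ} (h0 : ∀ M, 0 ≤ D M)
    (hsum : (∑ M : Finset (L × R), D M) = 1) {A : Finset L} {k : ℕ}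
    (h : ∀ M, D M ≠ 0 → (A ∩ M.image Prod.fst).card ≤ k) :
    ∑ u ∈ A, covP D u ≤ (k : ℝ) := by
  rw [sum_covP]
  calc ∑ M : Finset (L × R), D M * ((A ∩ M.image Prod.fst).card : ℝ)
      ≤ ∑ M : Finset (L × R), D M * (k : ℝ) := by
        apply Finset.sum_le_sum
        intro M _
        by_cases hM : D M = 0
        · rw [hM]; simp
        · exact mul_le_mul_of_nonneg_left (by exact_mod_cast h M hM) (h0 M)
    _ = (k : ℝ) := by rw [← Finset.sum_mul, hsum, one_mul]

lemma exists_small_cov {D : Finset (L × R) → ℝ} (h0 : ∀ M, 0 ≤ D M)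
    (hsum : (∑ M : Finset (L × R), D M) = 1) {A : Finset L} {k : ℕ}
    (h : ∑ u ∈ A, covP D u < (k : ℝ)) :
    ∃ M, D M ≠ 0 ∧ (A ∩ M.image Prod.fst).card < k := by
  by_contra hcon
  push_neg at hcon
  have : (k : ℝ) ≤ ∑ u ∈ A, covP D u := by
    rw [sum_covP]
    calc (k : ℝ) = ∑ M : Finset (L × R), D M * (k : ℝ) := by
          rw [← Finset.sum_mul, hsum, one_mul]
      _ ≤ ∑ M : Finset (L × R), D M * ((A ∩ M.image Prod.fst).card : ℝ) := by
          apply Finset.sum_le_sum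
          intro M _
          by_cases hM : D M = 0
          · rw [hM]; simp
          · exact mul_le_mul_of_nonneg_left (by exact_mod_cast hcon M hM) (h0 M)
  linarith

/-- The key fairness exploitation lemma: if `M` is in the support of the maxmin-fair `F`,
`M'` is a matching, some `v` is covered by `M'` but not `M`, and every vertex covered by
`M` but not `M'` has coverage probability strictly greater than that of `v`, we get a
contradiction. -/
lemma fairness_exploit {E : Finset (L × R)} {F : Finset (L × R) → ℝ}
    (hF : MaxminFairM E F) {M M' : Finset (L × R)} (hM : F M ≠ 0)
    (hM' : IsMatching E M') {v : L}
    (hv1 : v ∈ M'.image Prod.fst) (hv2 : v ∉ M.image Prod.fst)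
    (hw : ∀ w : L, w ∈ M.image Prod.fst → w ∉ M'.image Prod.fst → covP F v < covP F w) :
    False := by
  obtain ⟨⟨hF0, hFsupp, hFsum⟩, hfair⟩ := hF
  have hMpos : 0 < F M := lt_of_le_of_ne (hF0 M) (Ne.symm hM)
  have hMM' : M ≠ M' := by
    intro h
    rw [h] at hv2
    exact hv2 hv1
  set D : Finset (L × R) → ℝ := fun N =>
    F N + (if N = M' then F M else 0) - (if N = M then F M else 0) with hD
  have hDval : ∀ N, D N = F N + (if N = M' then F M else 0) - (if N = M then F M else 0) :=
    fun N => rfl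
  have hD0 : ∀ N, 0 ≤ D N := by
    intro N
    rw [hDval]
    by_cases h1 : N = M
    · subst h1
      rw [if_neg hMM', if_pos rfl]
      linarith [hF0 N]
    · rw [if_neg h1]
      by_cases h2 : N = M'
      · rw [if_pos h2]
        linarith [hF0 N]
      · rw [if_neg h2]
        linarith [hF0 N]
  have hDsupp : ∀ N, D N ≠ 0 → IsMatching E N := by
    intro N hN
    by_cases h2 : N = M'
    · subst h2; exact hM'
    · by_cases h1 : N = M
      · subst h1; exact hFsupp N hM
      · rw [hDval, if_neg h2, if_neg h1] at hN
        simp only [add_zero, sub_zero] at hN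
        exact hFsupp N hN
  have hDsum : (∑ N : Finset (L × R), D N) = 1 := by
    simp only [hDval]
    rw [Finset.sum_sub_distrib, Finset.sum_add_distrib]
    rw [Finset.sum_ite_eq' Finset.univ M' (fun _ => F M),
      Finset.sum_ite_eq' Finset.univ M (fun _ => F M)]
    simp [hFsum]
  have hcovD : ∀ u : L, covP D u = covP F u +
      (if u ∈ M'.image Prod.fst then F M else 0) -
      (if u ∈ M.image Prod.fst then F M else 0) := by
    intro u
    unfold covP
    simp only [hDval]
    have hsplit : ∀ N : Finset (L × R),
        (if u ∈ N.image Prod.fst then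
          F N + (if N = M' then F M else 0) - (if N = M then F M else 0) else 0) =
        (if u ∈ N.image Prod.fst then F N else 0) +
        (if N = M' then (if u ∈ N.image Prod.fst then F M else 0) else 0) -
        (if N = M then (if u ∈ N.image Prod.fst then F M else 0) else 0) := by
      intro N
      split_ifs <;> simp_all
    rw [Finset.sum_congr rfl (fun N _ => hsplit N)]
    rw [Finset.sum_sub_distrib, Finset.sum_add_distrib]
    rw [Finset.sum_ite_eq' Finset.univ M' (fun N => if u ∈ N.image Prod.fst then F M else 0),
      Finset.sum_ite_eq' Finset.univ M (fun N => if u ∈ N.image Prod.fst then F M else 0)]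
    simp
  have hvD : covP F v < covP D v := by
    rw [hcovD v, if_pos hv1, if_neg hv2]
    linarith
  obtain ⟨w, hw1, hw2⟩ := hfair D ⟨hD0, hDsupp, hDsum⟩ v hvD
  have hwM : w ∈ M.image Prod.fst ∧ w ∉ M'.image Prod.fst := by
    rw [hcovD w] at hw1
    by_cases h1 : w ∈ M.image Prod.fst <;> by_cases h2 : w ∈ M'.image Prod.fst <;>
      simp [h1, h2] at hw1 <;> first | exact ⟨h1, h2⟩ | linarith [hMpos]
  exact absurd hw2 (not_le.2 (hw w hwM.1 hwM.2))

end Prob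

end Comb

/-- If the maximum matching size of `G` equals `|Γ(L)|`, then for every maxmin-fair
distribution `F` of matchings of `G` the maximum coverage probability `⨆ u : L, covP F u`
equals `max { (|Γ(L)| − |Γ(S)|) / |L \ S| : S ⊊ L }`. -/
theorem maxminFair_max_cov [Fintype L] [Fintype R] [DecidableEq L] [DecidableEq R]
    [Nonempty L] (E : Finset (L × R))
    (hρ : matchNum E = (nbhd E (Finset.univ : Finset L)).card)
    (F : Finset (L × R) → ℝ) (hF : MaxminFairM E F) :
    (⨆ u : L, covP F u) =
      sSup {x : ℝ | ∃ S : Finset L, S ⊂ Finset.univ ∧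
        x = (((nbhd E (Finset.univ : Finset L)).card : ℝ) - ((nbhd E S).card : ℝ)) /
          (((Finset.univ : Finset L) \ S).card : ℝ)} := by
  obtain ⟨⟨hF0, hFsupp, hFsum⟩, _⟩ := id hF
  set n := (nbhd E (Finset.univ : Finset L)).card with hn
  -- the maximum coverage probability
  obtain ⟨u₀, _, hu₀⟩ := Finset.exists_max_image Finset.univ (covP F) Finset.univ_nonempty
  set c := covP F u₀ with hcdef
  have hc : ∀ u : L, covP F u ≤ c := fun u => hu₀ u (Finset.mem_univ u)
  have hsup : (⨆ u : L, covP F u) = c :=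
    le_antisymm (ciSup_le hc)
      (le_ciSup (Set.Finite.bddAbove (Set.finite_range (covP F))) u₀)
  have hc1 : c ≤ 1 := covP_le_one hF0 hFsum u₀
  -- maximum matchings
  have hcard_le : ∀ M, IsMatching E M → M.card ≤ n := by
    intro M hM
    rw [← hρ]
    exact Finset.le_sup (Finset.mem_filter.2 ⟨Finset.mem_univ M, hM⟩)
  obtain ⟨Mmax, hMmaxmem, hMmaxsup⟩ :=
    Finset.exists_mem_eq_sup ((Finset.univ : Finset (Finset (L × R))).filter (IsMatching E))
      ⟨∅, Finset.mem_filter.2 ⟨Finset.mem_univ _, empty_isMatching⟩⟩ Finset.card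
  have hMmax : IsMatching E Mmax := (Finset.mem_filter.1 hMmaxmem).2
  have hMmaxcard : Mmax.card = n := by
    rw [← hρ]; exact hMmaxsup.symm
  have hBcard : (Mmax.image Prod.fst).card = n := by rw [card_cov hMmax, hMmaxcard]
  -- total coverage equals n
  have hTotal : ∑ u : L, covP F u = (n : ℝ) := by
    apply le_antisymm
    · apply sum_covP_le hF0 hFsum
      intro M hM
      rw [Finset.univ_inter]
      rw [card_cov (hFsupp M hM)]
      exact hcard_le M (hFsupp M hM)
    · by_contra hlt
      push_neg at hlt
      obtain ⟨M, hMsupp, hMsmall⟩ := exists_small_cov hF0 hFsum hlt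
      rw [Finset.univ_inter] at hMsmall
      have hMm : IsMatching E M := hFsupp M hMsupp
      obtain ⟨x, _, hxA, hxH⟩ := aug_lemma (hallOn_cov hMm) (hallOn_cov hMmax)
        (by rw [hBcard]; exact hMsmall)
      obtain ⟨M', hM', hM'cov⟩ := matching_of_hallOn hxH
      exact fairness_exploit hF hMsupp hM'
        (hM'cov (Finset.mem_insert_self x _)) hxA
        (fun w hw1 hw2 => absurd (hM'cov (Finset.mem_insert_of_mem hw1)) hw2)
  -- Part I : every ratio is ≤ c
  have partI : ∀ S : Finset L, S ⊂ Finset.univ →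
      ((n : ℝ) - ((nbhd E S).card : ℝ)) / (((Finset.univ : Finset L) \ S).card : ℝ) ≤ c := by
    intro S hS
    have hSsum : ∑ u ∈ S, covP F u ≤ ((nbhd E S).card : ℝ) :=
      sum_covP_le hF0 hFsum (fun M hM => card_inter_cov_le (hFsupp M hM) S)
    have hsplit : ∑ u ∈ Finset.univ \ S, covP F u + ∑ u ∈ S, covP F u
        = ∑ u : L, covP F u := Finset.sum_sdiff (Finset.subset_univ S)
    have hlow : (n : ℝ) - ((nbhd E S).card : ℝ) ≤ ∑ u ∈ Finset.univ \ S, covP F u := by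
      rw [← hTotal, ← hsplit]; linarith
    have hup : ∑ u ∈ Finset.univ \ S, covP F u ≤
        ((Finset.univ \ S).card : ℝ) * c := by
      have := Finset.sum_le_card_nsmul (Finset.univ \ S) (covP F) c
        (fun u _ => hc u)
      rwa [nsmul_eq_mul] at this
    have hpos : (0 : ℝ) < ((Finset.univ \ S).card : ℝ) := by
      have : (Finset.univ \ S).Nonempty := by
        rw [Finset.sdiff_nonempty]
        exact fun h => hS.ne (le_antisymm (Finset.subset_univ S) h)
      exact_mod_cast Finset.card_pos.2 this
    rw [div_le_iff₀ hpos]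
    calc (n : ℝ) - ((nbhd E S).card : ℝ) ≤ ((Finset.univ \ S).card : ℝ) * c := by linarith
      _ = c * ((Finset.univ \ S).card : ℝ) := mul_comm _ _
      _ = _ := by ring
  -- Part II : construct a set T achieving ratio ≥ c
  set S : Finset L := Finset.univ.filter (fun u => covP F u < c) with hSdef
  have hu₀S : u₀ ∉ S := by
    rw [hSdef, Finset.mem_filter]
    rintro ⟨-, h⟩
    exact lt_irrefl _ h
  -- maximum Hall subset of S
  obtain ⟨A, hAmem, hAsup⟩ :=
    Finset.exists_mem_eq_sup (S.powerset.filter (HallOn E))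
      ⟨∅, Finset.mem_filter.2 ⟨Finset.empty_mem_powerset S, hallOn_empty⟩⟩ Finset.card
  have hAS : A ⊆ S := Finset.mem_powerset.1 (Finset.mem_filter.1 hAmem).1
  have hAhall : HallOn E A := (Finset.mem_filter.1 hAmem).2
  have hAmax : ∀ A' ⊆ S, HallOn E A' → A'.card ≤ A.card := by
    intro A' hA'S hA'
    have hmem : A' ∈ S.powerset.filter (HallOn E) :=
      Finset.mem_filter.2 ⟨Finset.mem_powerset.2 hA'S, hA'⟩
    calc A'.card ≤ (S.powerset.filter (HallOn E)).sup Finset.card := Finset.le_sup hmem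
      _ = A.card := hAsup
  -- the low part saturates its maximum Hall subset
  have hSsum_eq : ∑ u ∈ S, covP F u = (A.card : ℝ) := by
    apply le_antisymm
    · apply sum_covP_le hF0 hFsum
      intro M hM
      exact hAmax _ Finset.inter_subset_left
        (hallOn_subset Finset.inter_subset_right (hallOn_cov (hFsupp M hM)))
    · by_contra hlt
      push_neg at hlt
      obtain ⟨M, hMsupp, hMsmall⟩ := exists_small_cov hF0 hFsum hlt
      have hMm : IsMatching E M := hFsupp M hMsupp
      have hA'hall : HallOn E (S ∩ M.image Prod.fst) :=
        hallOn_subset Finset.inter_subset_right (hallOn_cov hMm)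
      obtain ⟨x, hxA, hxA', hxH⟩ := aug_lemma hA'hall hAhall hMsmall
      obtain ⟨M', hM', hM'cov⟩ := matching_of_hallOn hxH
      have hxS : x ∈ S := hAS hxA
      have hxM : x ∉ M.image Prod.fst := fun h => hxA' (Finset.mem_inter.2 ⟨hxS, h⟩)
      refine fairness_exploit hF hMsupp hM' (hM'cov (Finset.mem_insert_self x _)) hxM ?_
      intro w hw1 hw2
      have hwS : w ∉ S := by
        intro hwS
        exact hw2 (hM'cov (Finset.mem_insert_of_mem (Finset.mem_inter.2 ⟨hwS, hw1⟩)))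
      have hwc : c ≤ covP F w := by
        rw [hSdef, Finset.mem_filter] at hwS
        push_neg at hwS
        exact hwS (Finset.mem_univ w)
      have hxc : covP F x < c := by
        rw [hSdef, Finset.mem_filter] at hxS
        exact hxS.2
      linarith
  -- the high part has coverage exactly c
  have hhigh : ∑ u ∈ Finset.univ \ S, covP F u = ((Finset.univ \ S).card : ℝ) * c := by
    rw [Finset.sum_congr rfl (fun u hu => ?_), Finset.sum_const, nsmul_eq_mul]
    have huS : u ∉ S := (Finset.mem_sdiff.1 hu).2
    rw [hSdef, Finset.mem_filter] at huS
    push_neg at huS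
    exact le_antisymm (hc u) (huS (Finset.mem_univ u))
  have hsplit : ∑ u ∈ Finset.univ \ S, covP F u + ∑ u ∈ S, covP F u
      = ∑ u : L, covP F u := Finset.sum_sdiff (Finset.subset_univ S)
  have hkey : ((Finset.univ \ S).card : ℝ) * c + (A.card : ℝ) = (n : ℝ) := by
    rw [← hhigh, ← hSsum_eq, hsplit, hTotal]
  -- tight set
  obtain ⟨T, hTS, hTineq⟩ := tight_lemma hAS hAhall hAmax
  have hu₀T : u₀ ∉ T := fun h => hu₀S (hTS h)
  have hTss : T ⊂ Finset.univ := Finset.ssubset_univ_iff.2 (fun h => hu₀T (h ▸ Finset.mem_univ u₀))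
  -- cardinality bookkeeping
  have hcards : (Finset.univ \ T).card = (Finset.univ \ S).card + (S \ T).card := by
    have h1 : (Finset.univ \ T).card = Finset.univ.card - T.card :=
      Finset.card_sdiff_of_subset (Finset.subset_univ T)
    have h2 : (Finset.univ \ S).card = Finset.univ.card - S.card :=
      Finset.card_sdiff_of_subset (Finset.subset_univ S)
    have h3 : (S \ T).card = S.card - T.card := Finset.card_sdiff_of_subset hTS
    have h4 : T.card ≤ S.card := Finset.card_le_card hTS
    have h5 : S.card ≤ Finset.univ.card := Finset.card_le_card (Finset.subset_univ S)
    omega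
  have hTpos : (0 : ℝ) < ((Finset.univ \ T).card : ℝ) := by
    have : (Finset.univ \ T).Nonempty :=
      ⟨u₀, Finset.mem_sdiff.2 ⟨Finset.mem_univ u₀, hu₀T⟩⟩
    exact_mod_cast Finset.card_pos.2 this
  have hc0 : 0 ≤ c := covP_nonneg hF0 u₀
  -- the final inequality c ≤ ratio(T)
  have hcle : c ≤ ((n : ℝ) - ((nbhd E T).card : ℝ)) / (((Finset.univ : Finset L) \ T).card : ℝ) := by
    rw [le_div_iff₀ hTpos]
    have hk2 : c * ((S \ T).card : ℝ) ≤ ((S \ T).card : ℝ) :=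
      mul_le_of_le_one_left (by positivity) hc1
    have hineqR : ((nbhd E T).card : ℝ) + ((S \ T).card : ℝ) ≤ (A.card : ℝ) := by
      exact_mod_cast hTineq
    have : c * ((Finset.univ \ T).card : ℝ)
        = ((Finset.univ \ S).card : ℝ) * c + c * ((S \ T).card : ℝ) := by
      rw [hcards]
      push_cast
      ring
    rw [this]
    linarith
  -- put everything together
  have hub : ∀ x ∈ {x : ℝ | ∃ S : Finset L, S ⊂ Finset.univ ∧
      x = ((n : ℝ) - ((nbhd E S).card : ℝ)) /
        (((Finset.univ : Finset L) \ S).card : ℝ)}, x ≤ c := by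
    rintro x ⟨S', hS', rfl⟩
    exact partI S' hS'
  have hmemT : ((n : ℝ) - ((nbhd E T).card : ℝ)) /
      (((Finset.univ : Finset L) \ T).card : ℝ) ∈
      {x : ℝ | ∃ S : Finset L, S ⊂ Finset.univ ∧
        x = ((n : ℝ) - ((nbhd E S).card : ℝ)) /
          (((Finset.univ : Finset L) \ S).card : ℝ)} := ⟨T, hTss, rfl⟩
  rw [hsup]
  apply le_antisymm
  · exact hcle.trans (le_csSup ⟨c, hub⟩ hmemT)
  · exact csSup_le ⟨_, hmemT⟩ hub
end
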